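/- arXiv:1008.5137 — 3 statements merged into one kernel-verified Lean document; each statement's English description precedes it below -/
import Mathlib

section
/- With F as above, the Fourier transform of F satisfies F̂(ω) = −(1/ω) f̂(ω) for all ω ≠ 0, where f̂ is the Fourier transform of f. -/
open MeasureTheory Complex Set
open scoped Interval

/-! Because `∫ f = 0`, the non-integrable kernel `sign (t - u) / 2` can be traded, for every `t`,
for `orientedIndicator u 0 t`, the signed indicator of the interval between `u` and `0`. This
kernel has `∫ |·| dt = |u|`, so the first moment of `f` licenses Fubini, and its Fourier transform
in `t` is `∫ in u..0, e^{iωt} dt = (1 - e^{iωu}) / (iω)`. Integrating against `f` and using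
`∫ f = 0` once more leaves `F̂ ω = i · (-f̂ ω) / (iω)`. -/

noncomputable def orientedIndicator (a b t : ℝ) : ℝ :=
  (Ioc a b).indicator 1 t - (Ioc b a).indicator 1 t

lemma abs_orientedIndicator (a b t : ℝ) : |orientedIndicator a b t| = (Ι a b).indicator 1 t := by
  rcases le_total a b with h | h
  · by_cases ht : t ∈ Ioc a b <;> simp [orientedIndicator, uIoc_of_le h, Ioc_eq_empty_of_le h, ht]
  · by_cases ht : t ∈ Ioc b a <;> simp [orientedIndicator, uIoc_of_ge h, Ioc_eq_empty_of_le h, ht]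

lemma abs_orientedIndicator_le_one (a b t : ℝ) : |orientedIndicator a b t| ≤ 1 := by
  rw [abs_orientedIndicator]
  by_cases ht : t ∈ Ι a b <;> simp [ht]

lemma measurable_orientedIndicator_fst (b : ℝ) :
    Measurable fun p : ℝ × ℝ => orientedIndicator p.1 b p.2 := by
  have h₁ : MeasurableSet {p : ℝ × ℝ | p.2 ∈ Ioc p.1 b} :=
    (measurableSet_lt measurable_fst measurable_snd).inter
      (measurableSet_le measurable_snd measurable_const)
  have h₂ : MeasurableSet {p : ℝ × ℝ | p.2 ∈ Ioc b p.1} :=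
    (measurableSet_lt measurable_const measurable_snd).inter
      (measurableSet_le measurable_snd measurable_fst)
  exact (measurable_const.indicator h₁).sub (measurable_const.indicator h₂)

lemma integrable_orientedIndicator (a b : ℝ) : Integrable (orientedIndicator a b) := by
  have h : ∀ a b : ℝ, Integrable ((Ioc a b).indicator (1 : ℝ → ℝ)) := fun a b =>
    (integrableOn_const measure_Ioc_lt_top.ne).integrable_indicator measurableSet_Ioc
  exact (h a b).sub (h b a)

lemma integral_abs_orientedIndicator (a b : ℝ) : ∫ t, |orientedIndicator a b t| = |a - b| := by
  simp_rw [abs_orientedIndicator, Pi.one_def]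
  rw [integral_indicator_const _ measurableSet_uIoc, measureReal_def, Real.volume_uIoc,
    ENNReal.toReal_ofReal (abs_nonneg _), smul_eq_mul, mul_one, abs_sub_comm]

section

variable {E : Type*} [NormedAddCommGroup E] [NormedSpace ℝ E]

lemma integral_orientedIndicator_smul {c : ℝ → E} {a b : ℝ}
    (hc : IntervalIntegrable c volume a b) :
    ∫ t, orientedIndicator a b t • c t = ∫ t in a..b, c t := by
  have hind : ∀ (s : Set ℝ) t, s.indicator (1 : ℝ → ℝ) t • c t = s.indicator c t := fun s t => by
    by_cases ht : t ∈ s <;> simp [ht]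
  simp only [orientedIndicator, sub_smul, hind]
  rw [integral_sub (hc.1.integrable_indicator measurableSet_Ioc)
    (hc.2.integrable_indicator measurableSet_Ioc), integral_indicator measurableSet_Ioc,
    integral_indicator measurableSet_Ioc]
  rfl

lemma sign_sub_eq_two_mul_orientedIndicator_sub {u t : ℝ} (b : ℝ) (h : u ≠ t) :
    Real.sign (t - u) = 2 * orientedIndicator u b t - if t ≤ b then 1 else -1 := by
  rcases h.lt_or_gt with h | h
  · rw [Real.sign_of_pos (sub_pos.2 h)]
    simp only [orientedIndicator, indicator, mem_Ioc, Pi.one_apply]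
    split_ifs <;> grind
  · rw [Real.sign_of_neg (sub_neg.2 h)]
    simp only [orientedIndicator, indicator, mem_Ioc, Pi.one_apply]
    split_ifs <;> grind

lemma integral_sign_sub_smul {g : ℝ → E} (hg : Integrable g) (hg₀ : ∫ u, g u = 0) (b t : ℝ) :
    ∫ u, Real.sign (t - u) • g u = (2 : ℝ) • ∫ u, orientedIndicator u b t • g u := by
  have hK : Integrable fun u => orientedIndicator u b t • g u :=
    hg.bdd_smul 1
      ((measurable_orientedIndicator_fst b).comp
        (measurable_id.prodMk measurable_const)).aestronglyMeasurable
      (ae_of_all _ fun u => abs_orientedIndicator_le_one u b t)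
  calc ∫ u, Real.sign (t - u) • g u
      = ∫ u, (2 : ℝ) • (orientedIndicator u b t • g u) - (if t ≤ b then 1 else -1 : ℝ) • g u := by
        refine integral_congr_ae ?_
        filter_upwards [Measure.ae_ne volume t] with u hu
        rw [sign_sub_eq_two_mul_orientedIndicator_sub b hu, sub_smul, mul_smul]
    _ = (2 : ℝ) • ∫ u, orientedIndicator u b t • g u := by
        rw [integral_sub, integral_smul, integral_smul, hg₀, smul_zero, sub_zero]
        exacts [hK.smul (2 : ℝ), hg.smul _]

lemma integrable_orientedIndicator_smul_prod (b : ℝ) {g : ℝ → E} (hg : AEStronglyMeasurable g)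
    (hg₁ : Integrable fun u => (u - b) • g u) :
    Integrable (fun p : ℝ × ℝ => orientedIndicator p.1 b p.2 • g p.1) (volume.prod volume) := by
  have hmeas : AEStronglyMeasurable (fun p : ℝ × ℝ => orientedIndicator p.1 b p.2 • g p.1)
      (volume.prod volume) :=
    (measurable_orientedIndicator_fst b).aestronglyMeasurable.smul
      (hg.comp_quasiMeasurePreserving Measure.quasiMeasurePreserving_fst)
  have hnorm : ∀ u, ∫ t, ‖orientedIndicator u b t • g u‖ = ‖(u - b) • g u‖ := fun u => by
    simp_rw [norm_smul, Real.norm_eq_abs]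
    rw [integral_mul_const, integral_abs_orientedIndicator]
  exact (integrable_prod_iff hmeas).2
    ⟨ae_of_all _ fun u => (integrable_orientedIndicator u b).smul_const (g u),
      hg₁.norm.congr (ae_of_all _ fun u => (hnorm u).symm)⟩

end

lemma integral_mul_integral_orientedIndicator_smul {𝕜 : Type*} [RCLike 𝕜] {c g : ℝ → 𝕜} {C : ℝ}
    (b : ℝ) (hc : Continuous c) (hcC : ∀ t, ‖c t‖ ≤ C) (hg : AEStronglyMeasurable g)
    (hg₁ : Integrable fun u => (u - b) • g u) :
    ∫ t, c t * ∫ u, orientedIndicator u b t • g u = ∫ u, (∫ t in u..b, c t) * g u := by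
  have hprod := (integrable_orientedIndicator_smul_prod b hg hg₁).bdd_mul
    (hc.comp continuous_snd).aestronglyMeasurable (ae_of_all _ fun p => hcC p.2)
  calc ∫ t, c t * ∫ u, orientedIndicator u b t • g u
      = ∫ t, ∫ u, c t * (orientedIndicator u b t • g u) := by simp_rw [integral_const_mul]
    _ = ∫ u, ∫ t, c t * (orientedIndicator u b t • g u) := (integral_integral_swap hprod).symm
    _ = ∫ u, (∫ t in u..b, c t) * g u := by
        congr 1 with u
        simp_rw [mul_smul_comm, ← smul_mul_assoc]
        rw [integral_mul_const, integral_orientedIndicator_smul (hc.intervalIntegrable _ _)]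

theorem fourier_F_eq_general {f : ℝ → ℂ} (hf : Integrable f)
    (hf1 : Integrable (fun u : ℝ => (u : ℂ) * f u))
    (hzero : ∫ u, f u = 0)
    {ω : ℝ} (hω : ω ≠ 0) :
    ∫ t : ℝ, Complex.exp (Complex.I * ω * t) *
        ((Complex.I / 2) * ∫ u : ℝ, f u * (Real.sign (t - u) : ℂ)) =
      -(∫ u : ℝ, Complex.exp (Complex.I * ω * u) * f u) / (ω : ℂ) := by
  have hIω : I * ω ≠ 0 := mul_ne_zero I_ne_zero (ofReal_ne_zero.2 hω)
  have hsign : ∀ t : ℝ, ∫ u, f u * (Real.sign (t - u) : ℂ) =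
      2 * ∫ u, orientedIndicator u 0 t • f u := fun t => by
    simpa [real_smul, mul_comm] using integral_sign_sub_smul hf hzero 0 t
  have hexp : ∀ u : ℝ, ∫ t in u..0, exp (I * ω * t) = (1 - exp (I * ω * u)) / (I * ω) := fun u => by
    simpa using integral_exp_mul_complex (a := u) (b := 0) hIω
  have hnorm : ∀ t : ℝ, ‖exp (I * ω * t)‖ = 1 := fun t => by
    rw [mul_assoc, ← ofReal_mul, norm_exp_I_mul_ofReal]
  have hexp_int : Integrable fun u : ℝ => exp (I * ω * u) * f u :=
    hf.bdd_mul (c := 1) (by fun_prop) (ae_of_all _ fun u => (hnorm u).le)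
  calc _ = I * ∫ t : ℝ, exp (I * ω * t) * ∫ u, orientedIndicator u 0 t • f u := by
        rw [← integral_const_mul]
        congr 1 with t
        rw [hsign]
        ring
    _ = I * ∫ u : ℝ, (1 - exp (I * ω * u)) / (I * ω) * f u := by
        rw [integral_mul_integral_orientedIndicator_smul 0 (by fun_prop)
          (fun t => (hnorm t).le) hf.aestronglyMeasurable (by simpa [real_smul] using hf1)]
        simp_rw [hexp]
    _ = I * (((∫ u, f u) - ∫ u : ℝ, exp (I * ω * u) * f u) / (I * ω)) := by
        rw [← integral_sub hf hexp_int, ← integral_div]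
        congr 2 with u
        ring
    _ = _ := by
        rw [hzero, zero_sub]
        field_simp

/-- Let `f : ℝ → ℂ` be even and integrable with `∫ f = 0` and `∫ |u f u| < ∞`, and
let `F t = (i/2) ∫ f u * sign (t - u) du`.  Then the Fourier transform
`F̂ ω = ∫ e^{iωt} F t dt` satisfies `F̂ ω = - f̂ ω / ω` for all `ω ≠ 0`. -/
theorem fourier_F_eq {f : ℝ → ℂ} (hf : Integrable f)
    (hf1 : Integrable (fun u : ℝ => (u : ℂ) * f u))
    (heven : ∀ u, f (-u) = f u)
    (hzero : ∫ u, f u = 0)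
    {ω : ℝ} (hω : ω ≠ 0) :
    ∫ t : ℝ, Complex.exp (Complex.I * ω * t) *
        ((Complex.I / 2) * ∫ u : ℝ, f u * (Real.sign (t - u) : ℂ)) =
      -(∫ u : ℝ, Complex.exp (Complex.I * ω * u) * f u) / (ω : ℂ) :=
  fourier_F_eq_general hf hf1 hzero hω
end

section
/- Suppose a Hamiltonian H_s depends smoothly on s, has nondegenerate ground state ψ₀(s) with energy E₀(s), and a spectral gap: all other eigenvalues E_i(s) satisfy |E_i(s) − E₀(s)| ≥ ΔE. Let F : ℝ → ℂ be an odd integrable function whose Fourier transform satisfies F̂(ω) = −1/ω for |ω| ≥ 1, and define the quasi-adiabatic continuation operator iD_s = ∫ F(ΔE·t) e^{iH_s t} (∂_s H_s) e^{−iH_s t} dt. Then ∂_s ψ₀(s) = i D_s ψ₀(s) (with the phase convention ⟨ψ₀, ∂_s ψ₀⟩ = 0). -/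
/-!
In the eigenbasis of `H`, the Heisenberg-evolved perturbation `e^{iHt} ∂H e^{-iHt} ψ₀` has
component `e^{i(Eᵢ - E₀)t} ⟪ψᵢ, ∂H ψ₀⟫` along `ψᵢ`, so the `ψᵢ`-component of `i D ψ₀` is
`⟪ψᵢ, ∂H ψ₀⟫` times the Fourier transform of `F(ΔE ·)` at `Eᵢ - E₀`. For `i ≠ 0` the gap puts
this frequency where the transform equals `-1/(Eᵢ - E₀)`, which reproduces the coefficient of
first-order perturbation theory; for `i = 0` the frequency is `0`, where the transform of the odd
function vanishes, matching the phase convention `⟪ψ₀, ∂ψ₀⟫ = 0`.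
-/

open MeasureTheory

/-- The exact quasi-adiabatic continuation operator
`D = -i ∫ F(ΔE t) e^{iHt} (∂H) e^{-iHt} dt`. -/
noncomputable def qaOp {V : Type*} [NormedAddCommGroup V] [InnerProductSpace ℂ V]
    [FiniteDimensional ℂ V] (F : ℝ → ℂ) (ΔE : ℝ) (Hs Hder : V →L[ℂ] V) : V →L[ℂ] V :=
  (-Complex.I) • ∫ t : ℝ, F (ΔE * t) •
    (NormedSpace.exp ((Complex.I * (t : ℂ)) • Hs) ∘L Hder ∘L
      NormedSpace.exp ((-(Complex.I * (t : ℂ))) • Hs))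

theorem Function.Odd.integral_eq_zero {E : Type*} [NormedAddCommGroup E] [NormedSpace ℝ E]
    {f : ℝ → E} (hf : f.Odd) : ∫ t, f t = 0 := by
  have := IsAddTorsionFree.of_isTorsionFree ℝ E
  have h := integral_neg_eq_self f volume
  rwa [funext hf, integral_neg, neg_eq_self] at h

theorem integral_comp_mul_left_mul_exp_eq_neg_inv {F : ℝ → ℂ}
    (hFhat : ∀ ω : ℝ, 1 ≤ |ω| →
      ∫ t : ℝ, F t * Complex.exp (Complex.I * ω * t) = -1 / (ω : ℂ))
    {a ν : ℝ} (ha : 0 < a) (hν : a ≤ |ν|) :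
    ∫ t : ℝ, F (a * t) * Complex.exp (Complex.I * ν * t) = -1 / (ν : ℂ) := by
  have ha' : (a : ℂ) ≠ 0 := by exact_mod_cast ha.ne'
  have hν' : (ν : ℂ) ≠ 0 := by exact_mod_cast abs_pos.mp (ha.trans_le hν)
  have hscale : ∀ t : ℝ, F (a * t) * Complex.exp (Complex.I * ν * t)
      = F (a * t) * Complex.exp (Complex.I * ((ν / a : ℝ) : ℂ) * ((a * t : ℝ) : ℂ)) := by
    intro t
    push_cast
    field_simp
  simp_rw [hscale]
  rw [Measure.integral_comp_mul_left
      (fun u : ℝ => F u * Complex.exp (Complex.I * ((ν / a : ℝ) : ℂ) * u)),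
    hFhat _ (by rwa [abs_div, abs_of_pos ha, one_le_div ha]), abs_of_pos (inv_pos.2 ha),
    Complex.real_smul]
  push_cast
  field_simp

theorem NormedSpace.exp_apply_of_apply_eq_smul {𝕜 V : Type*} [RCLike 𝕜] [NormedAddCommGroup V]
    [NormedSpace 𝕜 V] [CompleteSpace V] {A : V →L[𝕜] V} {v : V} {μ : 𝕜} (h : A v = μ • v) :
    NormedSpace.exp A v = NormedSpace.exp μ • v := by
  have hpow : ∀ k : ℕ, (A ^ k) v = μ ^ k • v := by
    intro k
    induction k with
    | zero => simp
    | succ k ih => rw [pow_succ, mul_apply_eq_comp, h, map_smul, ih, smul_smul, pow_succ']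
  have hA := (NormedSpace.exp_series_hasSum_exp' (𝕂 := 𝕜) A).mapL
    (ContinuousLinearMap.apply 𝕜 V v)
  have hμ := (NormedSpace.exp_series_hasSum_exp' (𝕂 := 𝕜) μ).smul_const v
  simp only [ContinuousLinearMap.apply_apply, smul_apply, hpow, smul_smul] at hA
  exact hA.unique hμ

theorem IsSelfAdjoint.exp_I_mul_smul_mem_unitary {A : Type*} [NormedRing A] [NormedAlgebra ℂ A]
    [StarRing A] [ContinuousStar A] [CompleteSpace A] [StarModule ℂ A] {H : A}
    (hH : IsSelfAdjoint H) (t : ℝ) : NormedSpace.exp ((Complex.I * (t : ℂ)) • H) ∈ unitary A :=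
  let +nondep : NormedAlgebra ℚ A := .restrictScalars ℚ ℂ A
  NormedSpace.exp_mem_unitary_of_mem_skewAdjoint <| hH.smul_mem_skewAdjoint <| by
    simp [skewAdjoint.mem_iff]

noncomputable def heisenbergEvolution {V : Type*} [NormedAddCommGroup V] [NormedSpace ℂ V]
    (H A : V →L[ℂ] V) (t : ℝ) : V →L[ℂ] V :=
  NormedSpace.exp ((Complex.I * (t : ℂ)) • H) ∘L A ∘L
    NormedSpace.exp ((-(Complex.I * (t : ℂ))) • H)

theorem continuous_heisenbergEvolution {V : Type*} [NormedAddCommGroup V] [NormedSpace ℂ V]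
    [CompleteSpace V] (H A : V →L[ℂ] V) :
    Continuous (heisenbergEvolution H A) := by
  let +nondep : NormedAlgebra ℚ (V →L[ℂ] V) := .restrictScalars ℚ ℂ _
  unfold heisenbergEvolution
  fun_prop

section

variable {V : Type*} [NormedAddCommGroup V] [InnerProductSpace ℂ V] [CompleteSpace V]

/-- Writing the eigenvalue as the expectation `⟪v r, H r (v r)⟫` and differentiating
`⟪u, H r (v r)⟫ = ⟪v r, H r (v r)⟫ * ⟪u, v r⟫` needs no differentiability of `e`. -/
theorem inner_deriv_apply_eigenvector {H : ℝ → V →L[ℂ] V} {H' : V →L[ℂ] V} {v : ℝ → V}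
    {v' : V} {e : ℝ → ℂ} {u : V} {μ : ℝ} {s : ℝ} (hH : HasDerivAt H H' s)
    (hv : HasDerivAt v v' s) (hnorm : ∀ r, ‖v r‖ = 1) (hHv : ∀ r, H r (v r) = e r • v r)
    (hsa : IsSelfAdjoint (H s)) (hHu : H s u = (μ : ℂ) • u) (huv : inner ℂ u (v s) = 0) :
    inner ℂ u (H' (v s)) = (e s - μ) * inner ℂ u v' := by
  have hHv' : HasDerivAt (fun r => H r (v r)) (H' (v s) + H s v') s :=
    ((ContinuousLinearMap.restrictScalarsIsometry ℂ V V ℝ ℝ).toContinuousLinearMap.hasFDerivAt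
      |>.comp_hasDerivAt s hH).clm_apply hv
  have hexpect : ∀ r, inner ℂ (v r) (H r (v r)) = e r := fun r => by
    rw [hHv, inner_smul_right, inner_self_eq_norm_sq_to_K, hnorm]
    simp
  have hfactor : (fun r => inner ℂ u (H r (v r))) =
      fun r => inner ℂ (v r) (H r (v r)) * inner ℂ u (v r) := by
    funext r
    rw [hexpect, hHv, inner_smul_right]
  have hlhs : HasDerivAt (fun r => inner ℂ u (H r (v r))) (inner ℂ u (H' (v s) + H s v')) s :=
    ((innerSL ℂ u).restrictScalars ℝ).hasFDerivAt.comp_hasDerivAt s hHv'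
  have hrhs := (hv.inner (𝕜 := ℂ) hHv').mul
    (((innerSL ℂ u).restrictScalars ℝ).hasFDerivAt.comp_hasDerivAt s hv)
  rw [hfactor] at hlhs
  have hderiv := hlhs.unique hrhs
  have hsym : inner ℂ u (H s v') = μ * inner ℂ u v' := by
    rw [← ContinuousLinearMap.adjoint_inner_left, hsa.adjoint_eq, hHu, inner_smul_left,
      Complex.conj_ofReal]
  simp only [Function.comp_apply, ContinuousLinearMap.coe_restrictScalars', innerSL_apply_apply,
    inner_add_right, hsym, hexpect, huv, mul_zero, zero_add] at hderiv
  linear_combination hderiv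

theorem norm_heisenbergEvolution {H : V →L[ℂ] V} (hH : IsSelfAdjoint H) (A : V →L[ℂ] V)
    (t : ℝ) : ‖heisenbergEvolution H A t‖ = ‖A‖ := by
  have hneg : -(Complex.I * (t : ℂ)) = Complex.I * ((-t : ℝ) : ℂ) := by push_cast; ring
  rw [heisenbergEvolution, hneg, ← ContinuousLinearMap.mul_def, ← ContinuousLinearMap.mul_def,
    CStarRing.norm_mem_unitary_mul _ (hH.exp_I_mul_smul_mem_unitary t),
    CStarRing.norm_mul_mem_unitary _ (hH.exp_I_mul_smul_mem_unitary (-t))]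

theorem MeasureTheory.Integrable.smul_heisenbergEvolution {G : ℝ → ℂ} (hG : Integrable G)
    {H : V →L[ℂ] V} (hH : IsSelfAdjoint H) (A : V →L[ℂ] V) :
    Integrable fun t => G t • heisenbergEvolution H A t :=
  hG.smul_bdd ‖A‖ (continuous_heisenbergEvolution H A).aestronglyMeasurable
    (Filter.Eventually.of_forall fun t => (norm_heisenbergEvolution hH A t).le)

section Eigenbasis

variable {ι : Type*} [Fintype ι] {H : V →L[ℂ] V} {b : ι → V} {E : ι → ℝ}

theorem exp_smul_apply_eq_sum (hcomplete : ∀ v, v = ∑ i, inner ℂ (b i) v • b i)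
    (heig : ∀ i, H (b i) = (E i : ℂ) • b i) (c : ℂ) (v : V) :
    NormedSpace.exp (c • H) v = ∑ i, (Complex.exp (c * E i) * inner ℂ (b i) v) • b i := by
  conv_lhs => rw [hcomplete v]
  refine (map_sum _ _ _).trans (Finset.sum_congr rfl fun i _ => ?_)
  rw [map_smul, NormedSpace.exp_apply_of_apply_eq_smul (μ := c * E i)
    (by rw [smul_apply, heig, smul_smul]), ← Complex.exp_eq_exp_ℂ, smul_smul, mul_comm]

theorem heisenbergEvolution_apply_of_eigenvector
    (hcomplete : ∀ v, v = ∑ i, inner ℂ (b i) v • b i) (heig : ∀ i, H (b i) = (E i : ℂ) • b i)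
    (A : V →L[ℂ] V) {v : V} {e : ℝ} (hv : H v = (e : ℂ) • v) (t : ℝ) :
    heisenbergEvolution H A t v =
      ∑ i, (Complex.exp (Complex.I * ((E i - e : ℝ) : ℂ) * t) * inner ℂ (b i) (A v)) • b i := by
  have hback : NormedSpace.exp ((-(Complex.I * t)) • H) v =
      Complex.exp (-(Complex.I * t) * e) • v := by
    rw [NormedSpace.exp_apply_of_apply_eq_smul (by rw [smul_apply, hv, smul_smul]),
      Complex.exp_eq_exp_ℂ]
  rw [heisenbergEvolution, ContinuousLinearMap.comp_apply, ContinuousLinearMap.comp_apply, hback,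
    map_smul, exp_smul_apply_eq_sum hcomplete heig]
  refine Finset.sum_congr rfl fun i _ => ?_
  rw [inner_smul_right, ← mul_assoc, ← Complex.exp_add]
  congr 3
  push_cast
  ring

end Eigenbasis

end

theorem I_smul_qaOp_apply_of_eigenvector {V : Type*} [NormedAddCommGroup V]
    [InnerProductSpace ℂ V] [FiniteDimensional ℂ V] {ι : Type*} [Fintype ι] {H : V →L[ℂ] V}
    {b : ι → V} {E : ι → ℝ} (hH : IsSelfAdjoint H)
    (hcomplete : ∀ v, v = ∑ i, inner ℂ (b i) v • b i) (heig : ∀ i, H (b i) = (E i : ℂ) • b i)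
    {F : ℝ → ℂ} {ΔE : ℝ} (hF : Integrable fun t => F (ΔE * t)) (A : V →L[ℂ] V) {v : V} {e : ℝ}
    (hv : H v = (e : ℂ) • v) :
    Complex.I • qaOp F ΔE H A v = ∑ i, ((∫ t : ℝ, F (ΔE * t) *
      Complex.exp (Complex.I * ((E i - e : ℝ) : ℂ) * t)) * inner ℂ (b i) (A v)) • b i := by
  have hintegrable : ∀ ν : ℝ,
      Integrable fun t : ℝ => F (ΔE * t) * Complex.exp (Complex.I * ν * t) :=
    fun ν => hF.mul_bdd (c := 1) (by fun_prop) (Filter.Eventually.of_forall fun t => by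
      rw [Complex.norm_exp]; simp)
  calc Complex.I • qaOp F ΔE H A v
      = (∫ t, F (ΔE * t) • heisenbergEvolution H A t) v := by
        rw [← smul_apply, qaOp, smul_smul, mul_neg, Complex.I_mul_I, neg_neg, one_smul]; rfl
    _ = ∫ t, F (ΔE * t) • heisenbergEvolution H A t v :=
        ContinuousLinearMap.integral_apply (hF.smul_heisenbergEvolution hH A) v
    _ = ∫ t, ∑ i, ((F (ΔE * t) * Complex.exp (Complex.I * ((E i - e : ℝ) : ℂ) * t)) *
          inner ℂ (b i) (A v)) • b i := by
        simp_rw [heisenbergEvolution_apply_of_eigenvector hcomplete heig A hv, Finset.smul_sum,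
          smul_smul, mul_assoc]
    _ = _ := by
        rw [integral_finsetSum _ fun i _ => ((hintegrable _).mul_const _).smul_const _]
        simp_rw [integral_smul_const, integral_mul_const]

/-- Quasi-adiabatic continuation: for a smooth family `H_s` of Hermitian operators
with orthonormal eigenbasis `ψ i s`, eigenvalues `En i s`, nondegenerate ground state
`ψ 0 s` and spectral gap `ΔE`, and `F` odd and integrable with Fourier transform
`F̂(ω) = -1/ω` for `|ω| ≥ 1`, the ground state satisfies
`∂_s ψ₀(s) = i D_s ψ₀(s)` (with the phase convention `⟨ψ₀, ∂_s ψ₀⟩ = 0`). -/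
theorem quasi_adiabatic_continuation {V : Type*} [NormedAddCommGroup V]
    [InnerProductSpace ℂ V] [FiniteDimensional ℂ V] (n : ℕ)
    (Hs Hder : ℝ → (V →L[ℂ] V)) (hH : ∀ s, HasDerivAt Hs (Hder s) s)
    (hherm : ∀ s, IsSelfAdjoint (Hs s))
    (ψ : Fin (n + 1) → ℝ → V) (En : Fin (n + 1) → ℝ → ℝ)
    (hON : ∀ s, Orthonormal ℂ (fun i => ψ i s))
    (hcomplete : ∀ s (v : V), v = ∑ i, (inner ℂ (ψ i s) v : ℂ) • ψ i s)
    (heig : ∀ i s, Hs s (ψ i s) = ((En i s : ℝ) : ℂ) • ψ i s)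
    (ΔE : ℝ) (hΔE : 0 < ΔE)
    (hgap : ∀ i s, i ≠ 0 → En 0 s + ΔE ≤ En i s)
    (F : ℝ → ℂ) (hFint : Integrable F) (hFodd : ∀ t, F (-t) = -F t)
    (hFhat : ∀ ω : ℝ, 1 ≤ |ω| →
      ∫ t : ℝ, F t * Complex.exp (Complex.I * ω * t) = -1 / (ω : ℂ))
    (ψd : ℝ → V) (hψd : ∀ s, HasDerivAt (fun r => ψ 0 r) (ψd s) s)
    (hphase : ∀ s, (inner ℂ (ψ 0 s) (ψd s) : ℂ) = 0) (s : ℝ) :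
    ψd s = Complex.I • (qaOp F ΔE (Hs s) (Hder s)) (ψ 0 s) := by
  have hF : Integrable fun t => F (ΔE * t) := hFint.comp_mul_left' hΔE.ne'
  rw [I_smul_qaOp_apply_of_eigenvector (hherm s) (hcomplete s) (heig · s) hF (Hder s) (heig 0 s)]
  conv_lhs => rw [hcomplete s (ψd s)]
  refine Finset.sum_congr rfl fun i _ => congrArg (· • ψ i s) ?_
  rcases eq_or_ne i 0 with rfl | hi
  · simp only [sub_self, Complex.ofReal_zero, mul_zero, zero_mul, Complex.exp_zero, mul_one]
    rw [hphase, Function.Odd.integral_eq_zero fun t => by rw [mul_neg, hFodd], zero_mul]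
  · have hEi : ΔE ≤ |En i s - En 0 s| :=
      (le_sub_iff_add_le'.mpr (hgap i s hi)).trans (le_abs_self _)
    have hne : ((En i s - En 0 s : ℝ) : ℂ) ≠ 0 := by
      exact_mod_cast (show En i s - En 0 s ≠ 0 by linarith [hgap i s hi])
    rw [integral_comp_mul_left_mul_exp_eq_neg_inv hFhat hΔE hEi,
      inner_deriv_apply_eigenvector (hH s) (hψd s) (fun r => (hON r).1 0) (heig 0) (hherm s)
        (heig i s) ((hON s).2 hi)]
    field_simp
    push_cast
    ring
end

section
/- There is no unit vector ψ' orthogonal to the product state ψ = |↑↑...↑⟩ on N spin-1/2 sites such that for every single-site operator O, the off-diagonal matrix element ⟨ψ, O ψ'⟩ vanishes and the diagonal elements agree: ⟨ψ, Oψ⟩ = ⟨ψ', Oψ'⟩; i.e., the all-up product state has no topologically ordered partner even with respect to single-site operators, provided N ≥ 1. Concretely: for any unit ψ' ⟂ ψ there exists a site i and an operator O supported on site i with M(O; ψ, ψ') not a multiple of the identity. -/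
/-!
Take `O = |↓⟩⟨↓|` on site `i`. Its expectation in `ψ` is `0`, so `⟨ψ, Oψ⟩ = ⟨ψ', Oψ'⟩` forces
`ψ'` to vanish on every configuration with a down spin at `i`. Running over all sites leaves only
the all-up configuration, where `ψ'` vanishes by orthogonality to `ψ`; so `ψ' = 0`, contradicting
`‖ψ'‖ = 1`.
-/

/-- The operator on `(ℂ²)^{⊗N}` (realized as `EuclideanSpace ℂ (Fin N → Fin 2)`)
acting as the 2×2 matrix `m` on site `i` and as the identity elsewhere. -/
noncomputable def siteOp (N : ℕ) (i : Fin N) (m : Matrix (Fin 2) (Fin 2) ℂ) :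
    EuclideanSpace ℂ (Fin N → Fin 2) →L[ℂ] EuclideanSpace ℂ (Fin N → Fin 2) :=
  Matrix.toEuclideanCLM (𝕜 := ℂ)
    (Matrix.of fun c c' => if ∀ j, j ≠ i → c j = c' j then m (c i) (c' i) else 0)

/-- The all-spins-up product state `|↑↑⋯↑⟩`. -/
noncomputable def allUp (N : ℕ) : EuclideanSpace ℂ (Fin N → Fin 2) :=
  EuclideanSpace.single (fun _ => (0 : Fin 2)) (1 : ℂ)

lemma siteOp_diagonal (N : ℕ) (i : Fin N) (d : Fin 2 → ℂ) :
    siteOp N i (Matrix.diagonal d) =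
      Matrix.toEuclideanCLM (𝕜 := ℂ) (Matrix.diagonal fun c => d (c i)) := by
  rw [siteOp]
  congr 1
  ext c c'
  have hagree : ((∀ j, j ≠ i → c j = c' j) ∧ c i = c' i) ↔ c = c' :=
    ⟨fun ⟨hne, hi⟩ => funext fun j => if hj : j = i then hj ▸ hi else hne j hj,
      fun h => h ▸ ⟨fun _ _ => rfl, rfl⟩⟩
  simp only [Matrix.of_apply, Matrix.diagonal_apply, ← hagree]
  by_cases hne : ∀ j, j ≠ i → c j = c' j <;> by_cases hi : c i = c' i <;> simp [hne, hi]

lemma siteOp_diagonal_apply (N : ℕ) (i : Fin N) (d : Fin 2 → ℂ)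
    (x : EuclideanSpace ℂ (Fin N → Fin 2)) (c : Fin N → Fin 2) :
    siteOp N i (Matrix.diagonal d) x c = d (c i) * x c := by
  rw [siteOp_diagonal, Matrix.ofLp_toEuclideanCLM, Matrix.mulVec_diagonal]

lemma inner_siteOp_diagonal_self (N : ℕ) (i : Fin N) (d : Fin 2 → ℝ)
    (x : EuclideanSpace ℂ (Fin N → Fin 2)) :
    inner ℂ x (siteOp N i (Matrix.diagonal fun a => (d a : ℂ)) x) =
      ((∑ c, d (c i) * ‖x c‖ ^ 2 : ℝ) : ℂ) := by
  simp only [PiLp.inner_apply, siteOp_diagonal_apply, RCLike.inner_apply]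
  push_cast
  refine Finset.sum_congr rfl fun c _ => ?_
  rw [← Complex.conj_mul']
  ring

lemma inner_allUp_left (N : ℕ) (x : EuclideanSpace ℂ (Fin N → Fin 2)) :
    inner ℂ (allUp N) x = x fun _ => 0 := by
  simp [allUp, EuclideanSpace.inner_single_left]

noncomputable def spinDownProj : Matrix (Fin 2) (Fin 2) ℂ :=
  Matrix.diagonal fun a => ((Pi.single 1 1 : Fin 2 → ℝ) a : ℂ)

lemma inner_allUp_siteOp_spinDownProj (N : ℕ) (i : Fin N) :
    inner ℂ (allUp N) (siteOp N i spinDownProj (allUp N)) = 0 := by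
  simp [spinDownProj, inner_allUp_left, siteOp_diagonal_apply]

lemma apply_eq_zero_of_inner_siteOp_diagonal_self_eq_zero (N : ℕ) (i : Fin N) (d : Fin 2 → ℝ)
    (hd : 0 ≤ d) (x : EuclideanSpace ℂ (Fin N → Fin 2))
    (hx : inner ℂ x (siteOp N i (Matrix.diagonal fun a => (d a : ℂ)) x) = 0)
    (c : Fin N → Fin 2) (hc : 0 < d (c i)) : x c = 0 := by
  have hterm : ∀ c' ∈ Finset.univ, 0 ≤ d (c' i) * ‖x c'‖ ^ 2 :=
    fun c' _ => mul_nonneg (hd _) (sq_nonneg _)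
  rw [inner_siteOp_diagonal_self, Complex.ofReal_eq_zero,
    Finset.sum_eq_zero_iff_of_nonneg hterm] at hx
  simpa [hc.ne'] using hx c (Finset.mem_univ c)

theorem no_topological_partner_of_product_state_general (N : ℕ)
    (ψ' : EuclideanSpace ℂ (Fin N → Fin 2)) (hψ' : ‖ψ'‖ = 1)
    (horth : (inner ℂ (allUp N) ψ' : ℂ) = 0) :
    ∃ (i : Fin N) (m : Matrix (Fin 2) (Fin 2) ℂ),
      ¬ ((inner ℂ (allUp N) (siteOp N i m ψ') : ℂ) = 0 ∧
         (inner ℂ ψ' (siteOp N i m (allUp N)) : ℂ) = 0 ∧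
         (inner ℂ (allUp N) (siteOp N i m (allUp N)) : ℂ) =
           (inner ℂ ψ' (siteOp N i m ψ') : ℂ)) := by
  by_contra! h
  have hdown (i : Fin N) : inner ℂ ψ' (siteOp N i spinDownProj ψ') = 0 :=
    (h i spinDownProj).2.2.symm.trans (inner_allUp_siteOp_spinDownProj N i)
  have hzero : ψ' = 0 := by
    ext c
    by_cases hc : c = fun _ => 0
    · rw [hc, ← inner_allUp_left, horth]
      rfl
    obtain ⟨i, hi⟩ : ∃ i, c i ≠ 0 := by
      by_contra! hup
      exact hc (funext hup)
    exact apply_eq_zero_of_inner_siteOp_diagonal_self_eq_zero N i (Pi.single 1 1)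
      (Pi.single_nonneg.2 zero_le_one) ψ' (hdown i) c (by simp [Fin.eq_one_of_ne_zero _ hi])
  simp [hzero] at hψ'

/-- The all-up product state has no topologically ordered partner, even with
respect to single-site operators: for every unit `ψ'` orthogonal to
`ψ = |↑⋯↑⟩` there are a site `i` and a single-site operator `O = siteOp N i m`
whose 2×2 matrix in `{ψ, ψ'}` is not a multiple of the identity, i.e. it is
impossible that `⟨ψ, Oψ'⟩ = 0`, `⟨ψ', Oψ⟩ = 0` and `⟨ψ, Oψ⟩ = ⟨ψ', Oψ'⟩` all
hold. -/
theorem no_topological_partner_of_product_state (N : ℕ) (hN : 1 ≤ N)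
    (ψ' : EuclideanSpace ℂ (Fin N → Fin 2)) (hψ' : ‖ψ'‖ = 1)
    (horth : (inner ℂ (allUp N) ψ' : ℂ) = 0) :
    ∃ (i : Fin N) (m : Matrix (Fin 2) (Fin 2) ℂ),
      ¬ ((inner ℂ (allUp N) (siteOp N i m ψ') : ℂ) = 0 ∧
         (inner ℂ ψ' (siteOp N i m (allUp N)) : ℂ) = 0 ∧
         (inner ℂ (allUp N) (siteOp N i m (allUp N)) : ℂ) =
           (inner ℂ ψ' (siteOp N i m ψ') : ℂ)) :=
  no_topological_partner_of_product_state_general N ψ' hψ' horth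
end
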